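/- Let ξ be a nonnegative integer-valued random variable with P(ξ > k) ~ c/k as k → ∞ for some c > 0, and let ξ^{(n)} = ξ·1{ξ ≤ n·log n} be its truncation. Then E[ξ^{(n)}] ~ c·log n and E[(ξ^{(n)})²] ~ c·n·log n as n → ∞. -/

import Mathlib

open Filter MeasureTheory

/-!
Write `p k = P(ξ > k)`. Summing `ξ = ∑_{k<ξ} 1` and `ξ² = ∑_{k<ξ} (2k+1)` against the event
`ξ ≤ m` gives `E[ξ; ξ ≤ m] = ∑_{k<m} p k - m p m` and `E[ξ²; ξ ≤ m] = ∑_{k<m} (2k+1) p k - m² p m`.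
As `k p k → c`, comparison with the harmonic series gives `∑_{k<m} p k ~ c log m` and Cesàro
averaging gives `∑_{k<m} (2k+1) p k ~ 2cm`, while `m p m → c`; so the truncated moments are
`~ c log m` and `~ c m`. The cutoff `m = ⌊n log n⌋` satisfies `m ~ n log n` and `log m ~ log n`.
-/

open Finset Asymptotics Real Topology

theorem Asymptotics.IsEquivalent.sum_range {f g : ℕ → ℝ} (h : f ~[atTop] g) (hg : 0 ≤ g)
    (h'g : Tendsto (fun n => ∑ i ∈ range n, g i) atTop atTop) :
    (fun n => ∑ i ∈ range n, f i) ~[atTop] fun n => ∑ i ∈ range n, g i := by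
  simpa only [IsEquivalent, Pi.sub_def, ← sum_sub_distrib] using h.isLittleO.sum_range hg h'g

theorem isEquivalent_sum_range_inv_succ_log :
    (fun n : ℕ => ∑ k ∈ range n, ((k : ℝ) + 1)⁻¹) ~[atTop] fun n => log n := by
  have hH : ∀ n, (harmonic n : ℝ) = ∑ k ∈ range n, ((k : ℝ) + 1)⁻¹ := by simp [harmonic]
  simpa only [hH] using ((tendsto_harmonic_sub_log.isBigO_one ℝ).trans_isLittleO
    (isLittleO_const_log_atTop.comp_tendsto tendsto_natCast_atTop_atTop)).isEquivalent

theorem isEquivalent_const_mul_of_tendsto_div {α : Type*} {l : Filter α} {u v : α → ℝ} {c : ℝ}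
    (hc : c ≠ 0) (h : Tendsto (fun x => u x / v x) l (𝓝 c)) : u ~[l] fun x => c * v x := by
  refine isEquivalent_of_tendsto_one ?_
  simpa only [Pi.div_def, div_self hc, div_div, mul_comm] using h.div_const c

theorem tendsto_zero_of_tendsto_natCast_mul {b : ℕ → ℝ} {c : ℝ}
    (hb : Tendsto (fun k : ℕ => k * b k) atTop (𝓝 c)) : Tendsto b atTop (𝓝 0) := by
  have := hb.div_atTop tendsto_natCast_atTop_atTop
  refine this.congr' ?_
  filter_upwards [eventually_ne_atTop 0] with k hk
  field_simp

theorem isEquivalent_sum_range_log {b : ℕ → ℝ} {c : ℝ} (hc : c ≠ 0)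
    (hb : Tendsto (fun k : ℕ => k * b k) atTop (𝓝 c)) :
    (fun m : ℕ => ∑ k ∈ range m, b k) ~[atTop] fun m => c * log m := by
  have hbc : (fun k : ℕ => c⁻¹ * b k) ~[atTop] fun k => ((k : ℝ) + 1)⁻¹ := by
    refine isEquivalent_of_tendsto_one ?_
    have := (hb.add (tendsto_zero_of_tendsto_natCast_mul hb)).const_mul c⁻¹
    rw [add_zero, inv_mul_cancel₀ hc] at this
    refine this.congr fun k => ?_
    simp only [Pi.div_apply, div_inv_eq_mul]
    ring
  have hlog := isEquivalent_sum_range_inv_succ_log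
  have hsum := (hbc.sum_range (fun k => by positivity) <| hlog.symm.tendsto_atTop <|
    tendsto_log_atTop.comp tendsto_natCast_atTop_atTop).trans hlog
  refine (IsEquivalent.refl (u := fun _ => c)).mul hsum |>.congr_left <| .of_forall fun m => ?_
  simp only [Pi.mul_apply, ← mul_sum, mul_inv_cancel_left₀ hc]

theorem isEquivalent_natFloor : (fun x : ℝ => (⌊x⌋₊ : ℝ)) ~[atTop] id :=
  isEquivalent_of_tendsto_one tendsto_nat_floor_div_atTop

theorem isEquivalent_log_mul_log : (fun x : ℝ => log (x * log x)) ~[atTop] log := by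
  refine ((isLittleO_log_id_atTop.comp_tendsto tendsto_log_atTop).add_isEquivalent
    IsEquivalent.refl).congr_left ?_
  filter_upwards [eventually_gt_atTop 1] with x hx
  rw [log_mul (by positivity) (log_pos hx).ne']
  simp [add_comm]

section LayerCake

variable {Ω : Type*} [MeasurableSpace Ω] (μ : Measure Ω) [IsFiniteMeasure μ] {ξ : Ω → ℕ}

theorem integral_ite_le_sum_range (hξ : Measurable ξ) (w : ℕ → ℝ) (m : ℕ) :
    ∫ ω, (if ξ ω ≤ m then ∑ k ∈ range (ξ ω), w k else 0) ∂μ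
      = ∑ k ∈ range m, w k * (μ.real {ω | k < ξ ω} - μ.real {ω | m < ξ ω}) := by
  have hmeas : ∀ j : ℕ, MeasurableSet {ω | j < ξ ω} := fun j => hξ measurableSet_Ioi
  have hint : ∀ j : ℕ, Integrable ({ω | j < ξ ω}.indicator (1 : Ω → ℝ)) μ :=
    fun j => (integrable_const 1).indicator (hmeas j)
  have hpt : ∀ ω, (if ξ ω ≤ m then ∑ k ∈ range (ξ ω), w k else 0) = ∑ k ∈ range m,
      w k * ({ω | k < ξ ω}.indicator 1 ω - {ω | m < ξ ω}.indicator (1 : Ω → ℝ) ω) := by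
    intro ω
    split_ifs with h
    · simp only [Set.indicator_apply, Set.mem_ofPred_eq, h.not_gt, if_false, Pi.one_apply,
        sub_zero, mul_ite, mul_one, mul_zero]
      rw [← sum_filter]
      congr 1
      ext k
      simp only [mem_filter, mem_range]
      omega
    · have hm : m < ξ ω := not_le.1 h
      refine (sum_eq_zero fun k hk => ?_).symm
      simp [hm, (mem_range.1 hk).trans hm]
  simp_rw [hpt]
  rw [integral_finsetSum]
  · simp_rw [integral_const_mul, integral_sub (hint _) (hint m), integral_indicator_one (hmeas _)]
  · exact fun k _ => ((hint k).sub (hint m)).const_mul (w k)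

theorem sum_range_two_mul_add_one (j : ℕ) : ∑ k ∈ range j, (2 * (k : ℝ) + 1) = j ^ 2 := by
  induction j with
  | zero => simp
  | succ j ih => rw [sum_range_succ, ih]; push_cast; ring

theorem integral_truncated_eq (hξ : Measurable ξ) (m : ℕ) :
    ∫ ω, (if ξ ω ≤ m then (ξ ω : ℝ) else 0) ∂μ
      = ∑ k ∈ range m, μ.real {ω | k < ξ ω} - m * μ.real {ω | m < ξ ω} := by
  simpa [mul_sub, sum_sub_distrib] using integral_ite_le_sum_range μ hξ (fun _ => 1) m

theorem integral_truncated_sq_eq (hξ : Measurable ξ) (m : ℕ) :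
    ∫ ω, (if ξ ω ≤ m then (ξ ω : ℝ) ^ 2 else 0) ∂μ
      = ∑ k ∈ range m, (2 * (k : ℝ) + 1) * μ.real {ω | k < ξ ω}
        - m ^ 2 * μ.real {ω | m < ξ ω} := by
  simpa [mul_sub, sum_sub_distrib, ← sum_mul, sum_range_two_mul_add_one]
    using integral_ite_le_sum_range μ hξ (fun k => 2 * (k : ℝ) + 1) m

end LayerCake

section CutoffAsymptotics

variable {Ω : Type*} [MeasurableSpace Ω] {μ : Measure Ω} [IsFiniteMeasure μ] {ξ : Ω → ℕ} {c : ℝ}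

theorem isEquivalent_integral_truncated (hξ : Measurable ξ) (hc : c ≠ 0)
    (htail : Tendsto (fun k : ℕ => k * μ.real {ω | k < ξ ω}) atTop (𝓝 c)) :
    (fun m : ℕ => ∫ ω, (if ξ ω ≤ m then (ξ ω : ℝ) else 0) ∂μ) ~[atTop] fun m => c * log m := by
  simp_rw [integral_truncated_eq μ hξ]
  refine (isEquivalent_sum_range_log hc htail).sub_isLittleO ?_
  exact (htail.isBigO_one ℝ).trans_isLittleO <|
    (isLittleO_const_log_atTop.comp_tendsto tendsto_natCast_atTop_atTop).const_mul_right hc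

theorem isEquivalent_integral_truncated_sq (hξ : Measurable ξ) (hc : c ≠ 0)
    (htail : Tendsto (fun k : ℕ => k * μ.real {ω | k < ξ ω}) atTop (𝓝 c)) :
    (fun m : ℕ => ∫ ω, (if ξ ω ≤ m then (ξ ω : ℝ) ^ 2 else 0) ∂μ) ~[atTop] fun m => c * m := by
  refine isEquivalent_const_mul_of_tendsto_div hc ?_
  have hodd : Tendsto (fun k : ℕ => (2 * (k : ℝ) + 1) * μ.real {ω | k < ξ ω}) atTop
      (𝓝 (2 * c)) := by
    simpa [add_mul, mul_assoc] using
      (htail.const_mul 2).add (tendsto_zero_of_tendsto_natCast_mul htail)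
  have := hodd.cesaro.sub htail
  rw [show 2 * c - c = c by ring] at this
  refine this.congr' ?_
  filter_upwards [eventually_ne_atTop 0] with m hm
  rw [integral_truncated_sq_eq μ hξ]
  field_simp

end CutoffAsymptotics

/-- Truncated moments of a nonnegative integer random variable with Cauchy-type tail
`P(ξ > k) ~ c/k`: the truncation `ξ^{(n)} = ξ·1{ξ ≤ n log n}` satisfies
`E[ξ^{(n)}] ~ c log n` and `E[(ξ^{(n)})²] ~ c n log n`. -/
theorem truncated_moments {Ω : Type*} [MeasurableSpace Ω] (μ : Measure Ω)
    [IsProbabilityMeasure μ] (ξ : Ω → ℕ) (hmeas : Measurable ξ) (c : ℝ) (hc : 0 < c)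
    (htail : Tendsto (fun k : ℕ => (k : ℝ) * (μ {ω | k < ξ ω}).toReal) atTop (nhds c)) :
    Tendsto (fun n : ℕ =>
        (∫ ω, (if (ξ ω : ℝ) ≤ n * Real.log n then (ξ ω : ℝ) else 0) ∂μ)
          / (c * Real.log n)) atTop (nhds 1) ∧
    Tendsto (fun n : ℕ =>
        (∫ ω, (if (ξ ω : ℝ) ≤ n * Real.log n then (ξ ω : ℝ) ^ 2 else 0) ∂μ)
          / (c * n * Real.log n)) atTop (nhds 1) := by
  set m : ℕ → ℕ := fun n => ⌊(n : ℝ) * log n⌋₊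
  have hlog_atTop : Tendsto (fun n : ℕ => log n) atTop atTop :=
    tendsto_log_atTop.comp tendsto_natCast_atTop_atTop
  have hx : Tendsto (fun n : ℕ => (n : ℝ) * log n) atTop atTop :=
    tendsto_natCast_atTop_atTop.atTop_mul_atTop₀ hlog_atTop
  have hm : Tendsto m atTop atTop := tendsto_nat_floor_atTop.comp hx
  have hmx : (fun n => (m n : ℝ)) ~[atTop] fun n => (n : ℝ) * log n :=
    isEquivalent_natFloor.comp_tendsto hx
  have hlog : (fun n => log (m n)) ~[atTop] fun n : ℕ => log n :=
    (hmx.log hx).trans (isEquivalent_log_mul_log.comp_tendsto tendsto_natCast_atTop_atTop)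
  have hcut (n j : ℕ) : (j : ℝ) ≤ n * log n ↔ j ≤ m n := (Nat.le_floor_iff (by positivity)).symm
  have hpos : ∀ᶠ n : ℕ in atTop, 0 < (n : ℝ) ∧ 0 < log n :=
    (tendsto_natCast_atTop_atTop.eventually_gt_atTop 0).and (hlog_atTop.eventually_gt_atTop 0)
  simp_rw [hcut, mul_assoc c]
  constructor
  · refine (isEquivalent_iff_tendsto_one (hpos.mono fun n ⟨_, hlogn⟩ => by positivity)).mp ?_
    exact ((isEquivalent_integral_truncated hmeas hc.ne' htail).comp_tendsto hm).trans
      (IsEquivalent.refl.mul hlog)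
  · refine (isEquivalent_iff_tendsto_one (hpos.mono fun n ⟨hn, hlogn⟩ => by positivity)).mp ?_
    exact ((isEquivalent_integral_truncated_sq hmeas hc.ne' htail).comp_tendsto hm).trans
      (IsEquivalent.refl.mul hmx)
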